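/- arXiv:2605.10463 — 2 statements merged into one kernel-verified Lean document; each statement's English description precedes it below -/
import Mathlib

section
/- Energy bound for Bhattacharya geodesics under the doubling condition: Assume W : (0,∞) → ℝ is bounded from below and satisfies the doubling condition (A4), and G ∈ C([0,1]). Let N ≥ 1 be an integer, E ∈ ℝ, and p₀, p₁ ∈ Σ_N(E). Then the Bhattacharya geodesic γ between p₀ and p₁ satisfies γ(s,·) ∈ Σ_N(Ẽ) for every s ∈ [0,1], where Ẽ := 2C₁·E + C₂ + (2C₁ + 1)·‖G‖_∞. -/
open MeasureTheory Real Set Filter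

noncomputable section

/-- Discrete load: `G^N_i = N·∫_{i/N}^{(i+1)/N} G`. -/
def GN (G : ℝ → ℝ) (N : ℕ) (i : Fin N) : ℝ :=
  (N : ℝ) * ∫ x in ((i : ℝ) / N)..(((i : ℝ) + 1) / N), G x

/-- Membership in the discrete probability simplex `𝐏_N`. -/
def memPN (N : ℕ) (p : Fin N → ℝ) : Prop :=
  (∀ i, 0 < p i) ∧ (1 / (N : ℝ)) * ∑ i, p i = 1

/-- Discrete energy `ε_N(p) = (1/N) ∑ (W(p_i) − G^N_i p_i)`. -/
def energyN (W G : ℝ → ℝ) (N : ℕ) (p : Fin N → ℝ) : ℝ :=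
  (1 / (N : ℝ)) * ∑ i, (W (p i) - GN G N i * p i)

/-- The Hellinger distance of step functions in `𝐏_N`. -/
def HeN (N : ℕ) (p₀ p₁ : Fin N → ℝ) : ℝ :=
  Real.sqrt ((1 / (N : ℝ)) * ∑ i, (Real.sqrt (p₁ i) - Real.sqrt (p₀ i))^2)

/-- The Bhattacharya distance of step functions in `𝐏_N`. -/
def BhN (N : ℕ) (p₀ p₁ : Fin N → ℝ) : ℝ := 2 * Real.arcsin (HeN N p₀ p₁ / 2)

/-- The reparametrization `t(s)` of the Bhattacharya geodesic. -/
def tgeo (δ s : ℝ) : ℝ :=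
  if δ = 0 then s
  else Real.sin (s * δ) / (Real.sin (s * δ) + Real.sin ((1 - s) * δ))

/-- The normalization factor `ñ(t)`. -/
def ngeo (δ t : ℝ) : ℝ := 1 / (1 - 2 * (t - t^2) * (1 - Real.cos δ))

/-- The Bhattacharya geodesic between step functions `p₀, p₁ ∈ 𝐏_N`. -/
def geoN (N : ℕ) (p₀ p₁ : Fin N → ℝ) (s : ℝ) (i : Fin N) : ℝ :=
  ngeo (BhN N p₀ p₁) (tgeo (BhN N p₀ p₁) s) *
    ((1 - tgeo (BhN N p₀ p₁) s) * Real.sqrt (p₀ i) + tgeo (BhN N p₀ p₁) s * Real.sqrt (p₁ i))^2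

/-- The sup norm `‖G‖_∞` on `[0,1]`. -/
def supNorm (G : ℝ → ℝ) : ℝ := sSup ((fun x => |G x|) '' Set.Icc 0 1)

lemma aux_D (t c : ℝ) (ht0 : 0 ≤ t) (ht1 : t ≤ 1) (hc0 : 0 < c) (hc1 : c ≤ 1) :
    1/2 < 1 - 2*(t - t^2)*(1 - c) ∧ 1 - 2*(t - t^2)*(1 - c) ≤ 1 := by
  constructor
  · nlinarith [mul_nonneg (by nlinarith [sq_nonneg (t - 1/2)] : (0:ℝ) ≤ 1/4 - (t - t^2))
      (by linarith : (0:ℝ) ≤ 1 - c)]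
  · nlinarith [mul_nonneg (mul_nonneg ht0 (by linarith : (0:ℝ) ≤ 1 - t))
      (by linarith : (0:ℝ) ≤ 1 - c)]

lemma aux_comb (a b t : ℝ) (ha : 0 ≤ a) (hb : 0 ≤ b) (ht0 : 0 ≤ t) (ht1 : t ≤ 1) :
    min (a^2) (b^2) ≤ ((1-t)*a + t*b)^2 ∧ ((1-t)*a + t*b)^2 ≤ max (a^2) (b^2) := by
  rcases le_total a b with h | h
  · have hca : a ≤ (1-t)*a + t*b := by nlinarith [mul_nonneg ht0 (sub_nonneg.mpr h)]
    have hcb : (1-t)*a + t*b ≤ b := by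
      nlinarith [mul_nonneg (by linarith : (0:ℝ) ≤ 1 - t) (sub_nonneg.mpr h)]
    have hc0 : 0 ≤ (1-t)*a + t*b := le_trans ha hca
    have hab : a^2 ≤ b^2 := by nlinarith
    constructor
    · rw [min_eq_left hab]; exact pow_le_pow_left₀ ha hca 2
    · rw [max_eq_right hab]; exact pow_le_pow_left₀ hc0 hcb 2
  · have hca : b ≤ (1-t)*a + t*b := by
      nlinarith [mul_nonneg (by linarith : (0:ℝ) ≤ 1 - t) (sub_nonneg.mpr h)]
    have hcb : (1-t)*a + t*b ≤ a := by nlinarith [mul_nonneg ht0 (sub_nonneg.mpr h)]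
    have hc0 : 0 ≤ (1-t)*a + t*b := le_trans hb hca
    have hab : b^2 ≤ a^2 := by nlinarith
    constructor
    · rw [min_eq_right hab]; exact pow_le_pow_left₀ hb hca 2
    · rw [max_eq_left hab]; exact pow_le_pow_left₀ hc0 hcb 2

lemma aux_scale (n x lo hi : ℝ) (hn1 : 1 ≤ n) (hn2 : n ≤ 2) (hx0 : 0 ≤ x)
    (hlo : lo ≤ x) (hhi : x ≤ hi) : lo ≤ n*x ∧ n*x ≤ 2*hi := by
  constructor
  · nlinarith
  · nlinarith

lemma aux_mul (g M q : ℝ) (h : |g| ≤ M) (hq : 0 < q) : -(M*q) ≤ g*q ∧ g*q ≤ M*q := by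
  obtain ⟨h1, h2⟩ := abs_le.mp h
  constructor
  · nlinarith
  · nlinarith

set_option maxHeartbeats 1000000 in
/-- Energy bound for Bhattacharya geodesics under the doubling condition. -/
theorem energy_bound_for_Bh_geodesics
    (W G : ℝ → ℝ)
    (hWlb : ∃ c, ∀ x > (0:ℝ), c ≤ W x)
    (C1 C2 : ℝ) (hC1 : 0 ≤ C1) (hC2 : 0 ≤ C2)
    (hA4 : ∀ q₀ > (0:ℝ), ∀ q₁ > (0:ℝ), ∀ q ∈ Set.Icc (min q₀ q₁) (2 * max q₀ q₁),
      W q ≤ C1 * (W q₀ + W q₁) + C2)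
    (hG : ContinuousOn G (Set.Icc 0 1))
    (N : ℕ) (hN : 1 ≤ N) (E : ℝ)
    (p₀ p₁ : Fin N → ℝ)
    (h₀ : memPN N p₀) (h₀E : energyN W G N p₀ ≤ E)
    (h₁ : memPN N p₁) (h₁E : energyN W G N p₁ ≤ E) :
    ∀ s ∈ Set.Icc (0:ℝ) 1,
      memPN N (geoN N p₀ p₁ s) ∧
      energyN W G N (geoN N p₀ p₁ s) ≤ 2 * C1 * E + C2 + (2 * C1 + 1) * supNorm G := by
  obtain ⟨hp₀pos, hp₀sum⟩ := h₀
  obtain ⟨hp₁pos, hp₁sum⟩ := h₁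
  have hNpos : (0:ℝ) < N := by exact_mod_cast Nat.lt_of_lt_of_le Nat.zero_lt_one hN
  have hNne : (N:ℝ) ≠ 0 := ne_of_gt hNpos
  -- sup norm facts
  have hMb : ∀ x ∈ Set.Icc (0:ℝ) 1, |G x| ≤ supNorm G := by
    intro x hx
    exact le_csSup (IsCompact.bddAbove_image isCompact_Icc hG.abs) ⟨x, hx, rfl⟩
  have hM0 : 0 ≤ supNorm G :=
    le_trans (abs_nonneg _) (hMb 0 ⟨le_refl _, zero_le_one⟩)
  obtain ⟨M, hMdef⟩ : ∃ m, m = supNorm G := ⟨_, rfl⟩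
  rw [← hMdef]
  rw [← hMdef] at hMb hM0
  have hGNb : ∀ i : Fin N, |GN G N i| ≤ M := by
    intro i
    have hle : ((i:ℝ))/N ≤ ((i:ℝ)+1)/N := by
      gcongr
      linarith
    have hsub : Set.uIoc ((i:ℝ)/N) (((i:ℝ)+1)/N) ⊆ Set.Icc (0:ℝ) 1 := by
      rw [Set.uIoc_of_le hle]
      intro x hx
      have hx1 : (0:ℝ) ≤ (i:ℝ)/N := by positivity
      have hx2 : ((i:ℝ)+1)/N ≤ 1 := by
        rw [div_le_one hNpos]
        have : (i:ℕ) + 1 ≤ N := i.isLt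
        exact_mod_cast this
      exact ⟨le_trans hx1 (le_of_lt hx.1), le_trans hx.2 hx2⟩
    have hint := intervalIntegral.norm_integral_le_of_norm_le_const
      (C := M) (f := G) (a := (i:ℝ)/N) (b := ((i:ℝ)+1)/N)
      (fun x hx => hMb x (hsub hx))
    have hdiff : (((i:ℝ)+1)/N - (i:ℝ)/N) = 1/N := by field_simp; ring
    rw [hdiff] at hint
    rw [Real.norm_eq_abs, abs_of_pos (by positivity : (0:ℝ) < 1/(N:ℝ))] at hint
    rw [GN, abs_mul, abs_of_pos hNpos]
    calc (N:ℝ) * |∫ x in ((i:ℝ)/N)..(((i:ℝ)+1)/N), G x|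
        ≤ (N:ℝ) * (M * (1/N)) := mul_le_mul_of_nonneg_left hint hNpos.le
      _ = M := by field_simp
  -- Bhattacharya coefficient
  obtain ⟨Bv, hBdef⟩ : ∃ b, b = (1 / (N:ℝ)) * ∑ i, Real.sqrt (p₀ i) * Real.sqrt (p₁ i) :=
    ⟨_, rfl⟩
  have hNe : Nonempty (Fin N) := ⟨⟨0, hN⟩⟩
  have hBpos : 0 < Bv := by
    rw [hBdef]
    apply mul_pos (by positivity)
    exact Finset.sum_pos
      (fun i _ => mul_pos (Real.sqrt_pos.mpr (hp₀pos i)) (Real.sqrt_pos.mpr (hp₁pos i)))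
      Finset.univ_nonempty
  have hsumsq : ∑ i, (Real.sqrt (p₁ i) - Real.sqrt (p₀ i))^2
      = ∑ i, p₁ i + ∑ i, p₀ i - 2 * ∑ i, Real.sqrt (p₀ i) * Real.sqrt (p₁ i) := by
    rw [Finset.mul_sum, ← Finset.sum_add_distrib, ← Finset.sum_sub_distrib]
    refine Finset.sum_congr rfl fun i _ => ?_
    rw [sub_sq, Real.sq_sqrt (hp₀pos i).le, Real.sq_sqrt (hp₁pos i).le]
    ring
  have hHe0 : 0 ≤ HeN N p₀ p₁ := Real.sqrt_nonneg _
  have hHe_sq : (HeN N p₀ p₁)^2 = 2 - 2*Bv := by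
    rw [HeN, Real.sq_sqrt (by positivity), hsumsq]
    linear_combination hp₁sum + hp₀sum + 2 * hBdef
  have hB1 : Bv ≤ 1 := by nlinarith [sq_nonneg (HeN N p₀ p₁)]
  obtain ⟨δ, hδdef⟩ : ∃ d, d = BhN N p₀ p₁ := ⟨_, rfl⟩
  have hcos : Real.cos δ = Bv := by
    rw [hδdef, BhN, Real.cos_two_mul, Real.cos_arcsin,
      Real.sq_sqrt (by nlinarith : (0:ℝ) ≤ 1 - (HeN N p₀ p₁ / 2)^2)]
    linear_combination (-(1:ℝ)/2) * hHe_sq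
  have hcospos : 0 < Real.cos δ := by rw [hcos]; exact hBpos
  have hcos1 : Real.cos δ ≤ 1 := by rw [hcos]; exact hB1
  have hδ0 : 0 ≤ δ := by
    rw [hδdef, BhN]
    have : 0 ≤ Real.arcsin (HeN N p₀ p₁ / 2) := Real.arcsin_nonneg.mpr (by positivity)
    linarith
  have hδπ : δ ≤ π := by
    rw [hδdef, BhN]
    have := Real.arcsin_le_pi_div_two (HeN N p₀ p₁ / 2)
    linarith
  have hδhalf : δ < π/2 := by
    by_contra h
    push_neg at h
    have := Real.cos_nonpos_of_pi_div_two_le_of_le h (by linarith [Real.pi_pos])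
    linarith
  -- now fix s
  intro s hs
  obtain ⟨t, htdef⟩ : ∃ u, u = tgeo δ s := ⟨_, rfl⟩
  have ht : 0 ≤ t ∧ t ≤ 1 := by
    rw [htdef, tgeo]
    by_cases hδz : δ = 0
    · rw [if_pos hδz]; exact ⟨hs.1, hs.2⟩
    · rw [if_neg hδz]
      have hδpos : 0 < δ := lt_of_le_of_ne hδ0 (Ne.symm hδz)
      have hsδ1 : s * δ ≤ δ := by nlinarith [mul_nonneg (sub_nonneg.mpr hs.2) hδ0]
      have h1sδ1 : (1 - s) * δ ≤ δ := by nlinarith [mul_nonneg hs.1 hδ0]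
      have hs1 : 0 ≤ Real.sin (s*δ) :=
        Real.sin_nonneg_of_nonneg_of_le_pi (mul_nonneg hs.1 hδ0) (by linarith)
      have hs2 : 0 ≤ Real.sin ((1-s)*δ) :=
        Real.sin_nonneg_of_nonneg_of_le_pi (mul_nonneg (by linarith [hs.2]) hδ0) (by linarith)
      have hden : 0 < Real.sin (s*δ) + Real.sin ((1-s)*δ) := by
        rcases eq_or_lt_of_le hs.1 with h0 | h0
        · have h1s : (1:ℝ) - s = 1 := by rw [← h0]; ring
          have : 0 < Real.sin ((1-s)*δ) := by
            apply Real.sin_pos_of_pos_of_lt_pi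
            · rw [h1s, one_mul]; exact hδpos
            · rw [h1s, one_mul]; linarith [Real.pi_pos]
          linarith
        · have : 0 < Real.sin (s*δ) := by
            apply Real.sin_pos_of_pos_of_lt_pi
            · exact mul_pos h0 hδpos
            · linarith [Real.pi_pos]
          linarith
      constructor
      · exact div_nonneg hs1 hden.le
      · rw [div_le_one hden]; linarith
  have ht0 := ht.1
  have ht1 := ht.2
  -- normalization factor bounds
  have hDpos : 1/2 < 1 - 2*(t - t^2)*(1 - Real.cos δ) :=
    (aux_D t (Real.cos δ) ht0 ht1 hcospos hcos1).1
  have hD1 : 1 - 2*(t - t^2)*(1 - Real.cos δ) ≤ 1 :=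
    (aux_D t (Real.cos δ) ht0 ht1 hcospos hcos1).2
  have hn_eq : ngeo δ t = 1 / (1 - 2*(t - t^2)*(1 - Real.cos δ)) := rfl
  have hn1 : 1 ≤ ngeo δ t := by
    rw [hn_eq, le_div_iff₀ (by linarith)]; linarith
  have hn2 : ngeo δ t ≤ 2 := by
    rw [hn_eq, div_le_iff₀ (by linarith)]; linarith
  have hq_eq : ∀ i : Fin N, geoN N p₀ p₁ s i
      = ngeo δ t * ((1 - t) * Real.sqrt (p₀ i) + t * Real.sqrt (p₁ i))^2 := by
    intro i
    simp only [geoN, ← hδdef, ← htdef]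
  -- pointwise bounds
  have hcomb : ∀ i : Fin N,
      min (p₀ i) (p₁ i) ≤ ((1 - t) * Real.sqrt (p₀ i) + t * Real.sqrt (p₁ i))^2 ∧
      ((1 - t) * Real.sqrt (p₀ i) + t * Real.sqrt (p₁ i))^2 ≤ max (p₀ i) (p₁ i) := by
    intro i
    have ha2 := Real.sq_sqrt (hp₀pos i).le
    have hb2 := Real.sq_sqrt (hp₁pos i).le
    have := aux_comb (Real.sqrt (p₀ i)) (Real.sqrt (p₁ i)) t
      (Real.sqrt_nonneg _) (Real.sqrt_nonneg _) ht0 ht1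
    rw [ha2, hb2] at this
    exact this
  have hqlo : ∀ i : Fin N, min (p₀ i) (p₁ i) ≤ geoN N p₀ p₁ s i := by
    intro i
    rw [hq_eq i]
    exact (aux_scale (ngeo δ t) _ _ _ hn1 hn2 (sq_nonneg _) (hcomb i).1 (hcomb i).2).1
  have hqhi : ∀ i : Fin N, geoN N p₀ p₁ s i ≤ 2 * max (p₀ i) (p₁ i) := by
    intro i
    rw [hq_eq i]
    exact (aux_scale (ngeo δ t) _ _ _ hn1 hn2 (sq_nonneg _) (hcomb i).1 (hcomb i).2).2
  have hqpos : ∀ i : Fin N, 0 < geoN N p₀ p₁ s i := by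
    intro i
    have : 0 < min (p₀ i) (p₁ i) := lt_min (hp₀pos i) (hp₁pos i)
    exact lt_of_lt_of_le this (hqlo i)
  -- the sum of the geodesic is 1
  have hq_expand : ∀ i : Fin N, geoN N p₀ p₁ s i
      = (ngeo δ t * (1-t)^2) * p₀ i + (ngeo δ t * t^2) * p₁ i
        + (ngeo δ t * (2*t*(1-t))) * (Real.sqrt (p₀ i) * Real.sqrt (p₁ i)) := by
    intro i
    rw [hq_eq i]
    have ha2 := Real.sq_sqrt (hp₀pos i).le
    have hb2 := Real.sq_sqrt (hp₁pos i).le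
    linear_combination (ngeo δ t * (1-t)^2) * ha2 + (ngeo δ t * t^2) * hb2
  have hKD : ngeo δ t * (1 - 2*(t - t^2)*(1 - Bv)) = 1 := by
    have hDpos' : (0:ℝ) < 1 - 2*(t - t^2)*(1 - Bv) := by rw [← hcos]; linarith
    rw [hn_eq, hcos]
    field_simp
    exact div_self (ne_of_gt (by nlinarith [hDpos']))
  have hsum1 : (1/(N:ℝ)) * ∑ i, geoN N p₀ p₁ s i = 1 := by
    have hsplit : ∑ i, geoN N p₀ p₁ s i
        = (ngeo δ t * (1-t)^2) * ∑ i, p₀ i + (ngeo δ t * t^2) * ∑ i, p₁ i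
          + (ngeo δ t * (2*t*(1-t))) * ∑ i, Real.sqrt (p₀ i) * Real.sqrt (p₁ i) := by
      rw [Finset.mul_sum, Finset.mul_sum, Finset.mul_sum, ← Finset.sum_add_distrib,
        ← Finset.sum_add_distrib]
      exact Finset.sum_congr rfl fun i _ => hq_expand i
    rw [hsplit]
    linear_combination (ngeo δ t * (1-t)^2) * hp₀sum + (ngeo δ t * t^2) * hp₁sum
      - (ngeo δ t * (2*t*(1-t))) * hBdef + hKD
  -- energy estimates for p₀ and p₁
  have hWsum : ∀ (p : Fin N → ℝ), (∀ i, 0 < p i) → ((1/(N:ℝ)) * ∑ i, p i = 1) →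
      energyN W G N p ≤ E → (1/(N:ℝ)) * ∑ i, W (p i) ≤ E + M := by
    intro p hppos hpsum hpE
    have h1 : ∀ i : Fin N, W (p i) ≤ (W (p i) - GN G N i * p i) + M * p i := by
      intro i
      have h2 := (aux_mul (GN G N i) M (p i) (hGNb i) (hppos i)).2
      linarith
    have h3 : (1/(N:ℝ)) * ∑ i, W (p i)
        ≤ (1/(N:ℝ)) * ∑ i, ((W (p i) - GN G N i * p i) + M * p i) :=
      mul_le_mul_of_nonneg_left (Finset.sum_le_sum fun i _ => h1 i) (by positivity)
    have h4 : (1/(N:ℝ)) * ∑ i, ((W (p i) - GN G N i * p i) + M * p i)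
        = energyN W G N p + M * ((1/(N:ℝ)) * ∑ i, p i) := by
      rw [energyN, Finset.sum_add_distrib, ← Finset.mul_sum]
      ring
    rw [h4, hpsum] at h3
    linarith
  have hW0 := hWsum p₀ hp₀pos hp₀sum h₀E
  have hW1 := hWsum p₁ hp₁pos hp₁sum h₁E
  -- the energy of the geodesic
  have hWq : ∀ i : Fin N, W (geoN N p₀ p₁ s i) ≤ C1 * (W (p₀ i) + W (p₁ i)) + C2 := by
    intro i
    exact hA4 (p₀ i) (hp₀pos i) (p₁ i) (hp₁pos i) _ ⟨hqlo i, hqhi i⟩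
  have hterm : ∀ i : Fin N,
      W (geoN N p₀ p₁ s i) - GN G N i * geoN N p₀ p₁ s i
      ≤ (C1 * (W (p₀ i) + W (p₁ i)) + C2) + M * geoN N p₀ p₁ s i := by
    intro i
    have h2 := (aux_mul (GN G N i) M (geoN N p₀ p₁ s i) (hGNb i) (hqpos i)).1
    linarith [hWq i]
  have hE1 : energyN W G N (geoN N p₀ p₁ s)
      ≤ (1/(N:ℝ)) * ∑ i, ((C1 * (W (p₀ i) + W (p₁ i)) + C2) + M * geoN N p₀ p₁ s i) := by
    rw [energyN]
    exact mul_le_mul_of_nonneg_left (Finset.sum_le_sum fun i _ => hterm i) (by positivity)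
  have hE2 : (1/(N:ℝ)) * ∑ i, ((C1 * (W (p₀ i) + W (p₁ i)) + C2) + M * geoN N p₀ p₁ s i)
      = C1 * ((1/(N:ℝ)) * ∑ i, W (p₀ i)) + C1 * ((1/(N:ℝ)) * ∑ i, W (p₁ i)) + C2
        + M * ((1/(N:ℝ)) * ∑ i, geoN N p₀ p₁ s i) := by
    have hre : ∀ i : Fin N, (C1 * (W (p₀ i) + W (p₁ i)) + C2) + M * geoN N p₀ p₁ s i
        = C1 * W (p₀ i) + (C1 * W (p₁ i) + (C2 + M * geoN N p₀ p₁ s i)) := by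
      intro i; ring
    rw [Finset.sum_congr rfl fun i _ => hre i, Finset.sum_add_distrib, Finset.sum_add_distrib,
      Finset.sum_add_distrib, ← Finset.mul_sum, ← Finset.mul_sum, ← Finset.mul_sum,
      Finset.sum_const, Finset.card_univ, Fintype.card_fin, nsmul_eq_mul]
    have hone : (1/(N:ℝ)) * N = 1 := by field_simp
    linear_combination C2 * hone
  constructor
  · exact ⟨hqpos, hsum1⟩
  · calc energyN W G N (geoN N p₀ p₁ s)
        ≤ C1 * ((1/(N:ℝ)) * ∑ i, W (p₀ i)) + C1 * ((1/(N:ℝ)) * ∑ i, W (p₁ i)) + C2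
          + M * ((1/(N:ℝ)) * ∑ i, geoN N p₀ p₁ s i) := by rw [← hE2]; exact hE1
      _ ≤ C1 * (E + M) + C1 * (E + M) + C2 + M * 1 := by
          gcongr
          · rw [hsum1]
      _ = 2 * C1 * E + C2 + (2 * C1 + 1) * M := by ring
end
end

section
/- Sublevel evolutionary variational inequality in the Bhattacharya case: Let k(p) := 4p for all p ≥ 0, and assume W ∈ C²((0,∞)) with W(p) → ∞ as p → 0⁺ and W(p) → ∞ as p → ∞, satisfying (A3) for this k (i.e. there exist λ_W ∈ ℝ and B₁, B₂ ≥ 0, B₃ ∈ ℝ with 4p·W''(p) + 2W'(p) ≥ λ_W and |4p·W'(p)| ≤ B₁·W(p) + B₂ + B₃·(p − 1) for all p > 0) and the doubling condition (A4); let G ∈ C([0,1]). Let N ≥ 1 be an integer, E ∈ ℝ, q ∈ Σ_N(E), and let p : [0,∞) → 𝐏_N be the unique solution of the discrete gradient-flow ODE with p(0) ∈ Σ_N(E). Then for a.e. t > 0: (1/2)·limsup_{h→0⁺} (Bh(p(t+h), q)² − Bh(p(t), q)²)/h + (Λ/2)·Bh(p(t), q)² ≤ ε_N(q) − ε_N(p(t)),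 where Λ := L^inf(Ẽ) with Ẽ := 2C₁·E + C₂ + (2C₁ + 1)·‖G‖_∞ and L^inf(E') := λ_W − 2·(2·‖G‖_∞ + (B₁·(E' + ‖G‖_∞) + B₂)/4). -/
open MeasureTheory Real Set Filter

noncomputable section

/-- Weighted mean of `W'(q) − G^N` with weights `k(q)`. -/
def lamN (k W' G : ℝ → ℝ) (N : ℕ) (q : Fin N → ℝ) : ℝ :=
  (∑ j, k (q j) * (W' (q j) - GN G N j)) / (∑ j, k (q j))

/-- The gradient-flow vector field. -/
def VN (k W' G : ℝ → ℝ) (N : ℕ) (q : Fin N → ℝ) : Fin N → ℝ :=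
  fun i => -(k (q i)) * (W' (q i) - GN G N i - lamN k W' G N q)

/-- `p` solves the discrete gradient-flow ODE on `[0,∞)`. -/
def solvesODE (k W' G : ℝ → ℝ) (N : ℕ) (p : ℝ → Fin N → ℝ) : Prop :=
  ∀ t ∈ Set.Ici (0 : ℝ), HasDerivWithinAt p (VN k W' G N (p t)) (Set.Ici 0) t

namespace EVIAux

open Real

lemma trig1 (a b : ℝ) :
    sin a ^ 2 + sin b ^ 2 + 2 * sin a * sin b * cos (a + b) = sin (a + b) ^ 2 := by
  rw [sin_add, cos_add]
  linear_combination (-(sin a ^ 2)) * (sin_sq_add_cos_sq b) + (-(sin b ^ 2)) * (sin_sq_add_cos_sq a)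

lemma trig2 (a b : ℝ) :
    cos a ^ 2 + cos b ^ 2 - 2 * cos a * cos b * cos (a + b) = sin (a + b) ^ 2 := by
  rw [sin_add, cos_add]
  linear_combination (-(cos a ^ 2)) * (sin_sq_add_cos_sq b) + (-(cos b ^ 2)) * (sin_sq_add_cos_sq a)

lemma trig3 {a b : ℝ} (ha : 0 ≤ sin a) (hb : 0 ≤ sin b) :
    sin (a + b) ≤ sin a + sin b := by
  rw [sin_add]
  nlinarith [cos_le_one a, cos_le_one b]

lemma trig4 {a b : ℝ} (ha : 0 ≤ sin a) (hb : 0 ≤ sin b) (hab : 0 ≤ cos (a + b)) :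
    sin a ^ 2 + sin b ^ 2 ≤ sin (a + b) ^ 2 := by
  nlinarith [trig1 a b, mul_nonneg (mul_nonneg ha hb) hab]

lemma arcsin_le_pi_div_two_mul {x : ℝ} (h0 : 0 ≤ x) (h1 : x ≤ 1) :
    arcsin x ≤ π / 2 * x := by
  have h := Real.mul_le_sin (x := arcsin x) (Real.arcsin_nonneg.2 h0)
    (Real.arcsin_le_pi_div_two x)
  rw [Real.sin_arcsin (by linarith) h1] at h
  have hπ := Real.pi_pos
  rw [div_mul_eq_mul_div, div_le_iff₀ hπ] at h
  linarith [h]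

lemma le_supNorm {G : ℝ → ℝ} (hG : ContinuousOn G (Set.Icc 0 1)) {x : ℝ}
    (hx : x ∈ Set.Icc (0:ℝ) 1) : |G x| ≤ supNorm G :=
  le_csSup (isCompact_Icc.image_of_continuousOn hG.abs).bddAbove ⟨x, hx, rfl⟩

lemma supNorm_nonneg {G : ℝ → ℝ} (hG : ContinuousOn G (Set.Icc 0 1)) :
    0 ≤ supNorm G :=
  (abs_nonneg _).trans (le_supNorm hG (Set.mem_Icc.mpr ⟨le_refl _, zero_le_one⟩))

lemma abs_GN_le {G : ℝ → ℝ} (hG : ContinuousOn G (Set.Icc 0 1)) {N : ℕ}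
    (hN : 1 ≤ N) (i : Fin N) : |GN G N i| ≤ supNorm G := by
  have hN0 : (0:ℝ) < N := by exact_mod_cast Nat.pos_of_ne_zero (by omega)
  have hle : ((i:ℝ)) / N ≤ ((i:ℝ) + 1) / N := by
    apply (div_le_div_iff_of_pos_right hN0).mpr; linarith
  have hsub : Set.uIoc ((i:ℝ)/N) (((i:ℝ)+1)/N) ⊆ Set.Icc (0:ℝ) 1 := by
    rw [Set.uIoc_of_le hle]
    intro x hx
    have hi0 : (0:ℝ) ≤ (i:ℝ)/N := by positivity
    have hi1 : ((i:ℝ)+1)/N ≤ 1 := by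
      rw [div_le_one hN0]
      have : (i:ℕ) < N := i.isLt
      exact_mod_cast Nat.succ_le_of_lt this
    exact ⟨le_of_lt (lt_of_le_of_lt hi0 hx.1), hx.2.trans hi1⟩
  have key : ∀ x ∈ Set.uIoc ((i:ℝ)/N) (((i:ℝ)+1)/N), ‖G x‖ ≤ supNorm G :=
    fun x hx => le_supNorm hG (hsub hx)
  have := intervalIntegral.norm_integral_le_of_norm_le_const key
  have hdiff : |((i:ℝ)+1)/N - (i:ℝ)/N| = 1/N := by
    have h1 : ((i:ℝ)+1)/N - (i:ℝ)/N = 1/N := by field_simp; ring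
    rw [h1, abs_of_nonneg (by positivity)]
  rw [hdiff] at this
  have : |GN G N i| ≤ (N:ℝ) * (supNorm G * (1/N)) := by
    rw [GN, abs_mul, abs_of_nonneg hN0.le]
    exact mul_le_mul_of_nonneg_left this hN0.le
  calc |GN G N i| ≤ (N:ℝ) * (supNorm G * (1/N)) := this
    _ = supNorm G := by field_simp

end EVIAux
namespace EVIAux

lemma sum_comb {N : ℕ} (f g h : Fin N → ℝ) (c1 c2 c3 c4 : ℝ) :
    ∑ i, (c1 * f i + c2 * g i + c3 * h i + c4)
      = c1 * (∑ i, f i) + c2 * (∑ i, g i) + c3 * (∑ i, h i) + N * c4 := by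
  simp only [Finset.sum_add_distrib, ← Finset.mul_sum, Finset.sum_const,
    Finset.card_univ, Fintype.card_fin, nsmul_eq_mul]

lemma sum_PN {N : ℕ} (hN : 1 ≤ N) {p : Fin N → ℝ} (hp : memPN N p) :
    ∑ i, p i = N := by
  have hN0 : ((N:ℝ)) ≠ 0 := by
    have : (0:ℝ) < N := by exact_mod_cast Nat.pos_of_ne_zero (by omega)
    exact this.ne'
  have := hp.2
  field_simp at this
  linarith [this]

end EVIAux
namespace EVIAux

open Real

set_option maxHeartbeats 2000000 in
lemma key (W W' W'' : ℝ → ℝ)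
    (hW' : ∀ x > (0:ℝ), HasDerivAt W (W' x) x)
    (hW'' : ∀ x > (0:ℝ), HasDerivAt W' (W'' x) x)
    (lamW B1 B2 B3 : ℝ) (hB1 : 0 ≤ B1)
    (hA3a : ∀ x > (0:ℝ), lamW ≤ 4 * x * W'' x + 2 * W' x)
    (hA3c : ∀ x > (0:ℝ), |4 * x * W' x| ≤ B1 * W x + B2 + B3 * (x - 1))
    (C1 C2 : ℝ) (hC1 : 0 ≤ C1)
    (hA4 : ∀ q₀ > (0:ℝ), ∀ q₁ > (0:ℝ), ∀ x ∈ Set.Icc (min q₀ q₁) (2 * max q₀ q₁),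
      W x ≤ C1 * (W q₀ + W q₁) + C2)
    (G : ℝ → ℝ) (N : ℕ) (hN : 1 ≤ N) (τ A : ℝ) (hτ : 0 ≤ τ)
    (hGb : ∀ i, |GN G N i| ≤ τ)
    (p q : Fin N → ℝ) (hp : memPN N p) (hq : memPN N q)
    (hpA : (1/(N:ℝ)) * ∑ i, W (p i) ≤ A) (hqA : (1/(N:ℝ)) * ∑ i, W (q i) ≤ A)
    (θ : ℝ) (hθ0 : 0 < θ) (hθ2 : θ ≤ π/2)
    (hcos : (1/(N:ℝ)) * ∑ i, Real.sqrt (p i) * Real.sqrt (q i) = Real.cos θ) :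
    (1/(N:ℝ)) * ∑ i, ((W' (p i) - GN G N i) *
        (2 * Real.sqrt (p i) *
          (θ * (Real.sqrt (q i) - Real.cos θ * Real.sqrt (p i)) / Real.sin θ)))
      + (lamW - (B1 * (C1 * (A + A) + C2) + B2) / 2 - 4 * τ) / 2 * θ ^ 2
      ≤ energyN W G N q - energyN W G N p := by
  have hNR : (0:ℝ) < N := by exact_mod_cast Nat.pos_of_ne_zero (by omega)
  set u : Fin N → ℝ := fun i => Real.sqrt (p i) with hu_def
  set v : Fin N → ℝ := fun i => Real.sqrt (q i) with hv_def
  have hpi : ∀ i, 0 < p i := hp.1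
  have hqi : ∀ i, 0 < q i := hq.1
  have hu : ∀ i, 0 < u i := fun i => Real.sqrt_pos.2 (hpi i)
  have hv : ∀ i, 0 < v i := fun i => Real.sqrt_pos.2 (hqi i)
  have hu2 : ∀ i, u i ^ 2 = p i := fun i => Real.sq_sqrt (hpi i).le
  have hv2 : ∀ i, v i ^ 2 = q i := fun i => Real.sq_sqrt (hqi i).le
  have hθπ : θ < π := lt_of_le_of_lt hθ2 (by linarith [Real.pi_pos])
  have hsθ : 0 < Real.sin θ := Real.sin_pos_of_pos_of_lt_pi hθ0 hθπ
  have hcθ : 0 ≤ Real.cos θ := Real.cos_nonneg_of_mem_Icc ⟨by linarith, hθ2⟩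
  have hSp : ∑ i, u i ^ 2 = N := by
    simp only [hu2]; exact sum_PN hN hp
  have hSq : ∑ i, v i ^ 2 = N := by
    simp only [hv2]; exact sum_PN hN hq
  have hSuv : ∑ i, u i * v i = N * Real.cos θ := by
    rw [← hcos]; field_simp; rfl
  set γ : ℝ → Fin N → ℝ :=
    fun σ i => (Real.sin ((1-σ)*θ) * u i + Real.sin (σ*θ) * v i) / Real.sin θ with hγ_def
  set γd : ℝ → Fin N → ℝ :=
    fun σ i => θ * (-(Real.cos ((1-σ)*θ)) * u i + Real.cos (σ*θ) * v i) / Real.sin θ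
    with hγd_def
  -- derivatives of the geodesic
  have h1d : ∀ σ : ℝ, HasDerivAt (fun σ : ℝ => (1-σ)*θ) (-θ) σ := by
    intro σ
    simpa using ((hasDerivAt_id σ).const_sub 1).mul_const θ
  have h2d : ∀ σ : ℝ, HasDerivAt (fun σ : ℝ => σ*θ) θ σ := by
    intro σ
    simpa using (hasDerivAt_id σ).mul_const θ
  have hγana : ∀ (σ : ℝ) i, HasDerivAt (fun σ => γ σ i) (γd σ i) σ := by
    intro σ i
    have := (((h1d σ).sin.mul_const (u i)).fun_add ((h2d σ).sin.mul_const (v i))).div_const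
      (Real.sin θ)
    refine this.congr_deriv ?_
    simp only [hγd_def]
    ring
  have hγdana : ∀ (σ : ℝ) i, HasDerivAt (fun σ => γd σ i) (-θ^2 * γ σ i) σ := by
    intro σ i
    have := ((((h1d σ).cos.fun_neg.mul_const (u i)).fun_add ((h2d σ).cos.mul_const (v i))).const_mul
      θ).div_const (Real.sin θ)
    refine this.congr_deriv ?_
    simp only [hγ_def]
    ring
  -- trigonometric sums
  have hsum1 : ∀ σ : ℝ, ∑ i, (γ σ i)^2 = N := by
    intro σ
    have hab : (1-σ)*θ + σ*θ = θ := by ring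
    have ht := trig1 ((1-σ)*θ) (σ*θ)
    rw [hab] at ht
    have hterm : ∀ i ∈ Finset.univ, (γ σ i)^2 =
        (Real.sin ((1-σ)*θ)^2 / Real.sin θ ^2) * (u i ^ 2)
          + (Real.sin (σ*θ)^2 / Real.sin θ ^2) * (v i ^ 2)
          + (2 * Real.sin ((1-σ)*θ) * Real.sin (σ*θ) / Real.sin θ ^ 2) * (u i * v i)
          + 0 := by
      intro i _
      simp only [hγ_def]
      field_simp
      ring
    rw [Finset.sum_congr rfl hterm, sum_comb, hSp, hSq, hSuv]
    field_simp
    linear_combination ht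
  have hsum2 : ∀ σ : ℝ, ∑ i, (γd σ i)^2 = N * θ^2 := by
    intro σ
    have hab : (1-σ)*θ + σ*θ = θ := by ring
    have ht := trig2 ((1-σ)*θ) (σ*θ)
    rw [hab] at ht
    have hterm : ∀ i ∈ Finset.univ, (γd σ i)^2 =
        (Real.cos ((1-σ)*θ)^2 * θ^2 / Real.sin θ ^2) * (u i ^ 2)
          + (Real.cos (σ*θ)^2 * θ^2 / Real.sin θ ^2) * (v i ^ 2)
          + (-(2 * Real.cos ((1-σ)*θ) * Real.cos (σ*θ)) * θ^2 / Real.sin θ ^ 2) * (u i * v i)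
          + 0 := by
      intro i _
      simp only [hγd_def]
      field_simp
      ring
    rw [Finset.sum_congr rfl hterm, sum_comb, hSp, hSq, hSuv]
    field_simp
    linear_combination θ^2 * ht
  -- positivity and range of the geodesic
  have hsin_nonneg : ∀ σ ∈ Set.Icc (0:ℝ) 1, 0 ≤ Real.sin ((1-σ)*θ) ∧ 0 ≤ Real.sin (σ*θ) := by
    intro σ hσ
    constructor
    · apply Real.sin_nonneg_of_nonneg_of_le_pi
      · nlinarith [hσ.2, hθ0]
      · nlinarith [hσ.1, hθ0, hθπ]
    · apply Real.sin_nonneg_of_nonneg_of_le_pi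
      · nlinarith [hσ.1, hθ0]
      · nlinarith [hσ.2, hθ0, hθπ]
  have hsin_sum : ∀ σ ∈ Set.Icc (0:ℝ) 1,
      Real.sin θ ≤ Real.sin ((1-σ)*θ) + Real.sin (σ*θ) := by
    intro σ hσ
    have hab : (1-σ)*θ + σ*θ = θ := by ring
    have := trig3 (hsin_nonneg σ hσ).1 (hsin_nonneg σ hσ).2
    rwa [hab] at this
  have hsin_sq : ∀ σ ∈ Set.Icc (0:ℝ) 1,
      Real.sin ((1-σ)*θ)^2 + Real.sin (σ*θ)^2 ≤ Real.sin θ ^2 := by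
    intro σ hσ
    have hab : (1-σ)*θ + σ*θ = θ := by ring
    have := trig4 (hsin_nonneg σ hσ).1 (hsin_nonneg σ hσ).2 (by rw [hab]; exact hcθ)
    rwa [hab] at this
  have hγnum : ∀ σ ∈ Set.Icc (0:ℝ) 1, ∀ i,
      Real.sin θ * min (u i) (v i) ≤ Real.sin ((1-σ)*θ) * u i + Real.sin (σ*θ) * v i := by
    intro σ hσ i
    have h1 := (hsin_nonneg σ hσ).1
    have h2 := (hsin_nonneg σ hσ).2
    have h3 := hsin_sum σ hσ
    have hm : 0 < min (u i) (v i) := lt_min (hu i) (hv i)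
    have e1 : Real.sin ((1-σ)*θ) * min (u i) (v i) ≤ Real.sin ((1-σ)*θ) * u i :=
      mul_le_mul_of_nonneg_left (min_le_left _ _) h1
    have e2 : Real.sin (σ*θ) * min (u i) (v i) ≤ Real.sin (σ*θ) * v i :=
      mul_le_mul_of_nonneg_left (min_le_right _ _) h2
    have e3 : Real.sin θ * min (u i) (v i) ≤
        (Real.sin ((1-σ)*θ) + Real.sin (σ*θ)) * min (u i) (v i) :=
      mul_le_mul_of_nonneg_right h3 hm.le
    have e4 : (Real.sin ((1-σ)*θ) + Real.sin (σ*θ)) * min (u i) (v i)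
        = Real.sin ((1-σ)*θ) * min (u i) (v i) + Real.sin (σ*θ) * min (u i) (v i) := by
      ring
    linarith
  have hγpos : ∀ σ ∈ Set.Icc (0:ℝ) 1, ∀ i, 0 < γ σ i := by
    intro σ hσ i
    have hm : 0 < Real.sin θ * min (u i) (v i) := mul_pos hsθ (lt_min (hu i) (hv i))
    exact div_pos (lt_of_lt_of_le hm (hγnum σ hσ i)) hsθ
  have hγrange : ∀ σ ∈ Set.Icc (0:ℝ) 1, ∀ i,
      (γ σ i)^2 ∈ Set.Icc (min (p i) (q i)) (2 * max (p i) (q i)) := by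
    intro σ hσ i
    have h1 := (hsin_nonneg σ hσ).1
    have h2 := (hsin_nonneg σ hσ).2
    have h3 := hsin_sum σ hσ
    have h4 := hsin_sq σ hσ
    have hm : 0 < min (u i) (v i) := lt_min (hu i) (hv i)
    have hM : 0 < max (u i) (v i) := lt_max_of_lt_left (hu i)
    have hmin2 : min (u i) (v i) ^ 2 = min (p i) (q i) := by
      rcases le_total (p i) (q i) with h | h
      · rw [min_eq_left h, min_eq_left, hu2]
        exact Real.sqrt_le_sqrt h
      · rw [min_eq_right h, min_eq_right, hv2]
        exact Real.sqrt_le_sqrt h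
    have hmax2 : max (u i) (v i) ^ 2 = max (p i) (q i) := by
      rcases le_total (p i) (q i) with h | h
      · rw [max_eq_right h, max_eq_right, hv2]
        exact Real.sqrt_le_sqrt h
      · rw [max_eq_left h, max_eq_left, hu2]
        exact Real.sqrt_le_sqrt h
    constructor
    · -- lower: sinθ * min ≤ numerator, so min ≤ γ, and γ > 0
      have hlow := hγnum σ hσ i
      have hγm : min (u i) (v i) ≤ γ σ i := by
        simp only [hγ_def]
        rw [le_div_iff₀ hsθ]
        nlinarith [hlow]
      rw [← hmin2]
      exact pow_le_pow_left₀ hm.le hγm 2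
    · -- upper: numerator² ≤ 2 sinθ² max²
      have hup : (Real.sin ((1-σ)*θ) * u i + Real.sin (σ*θ) * v i)^2 ≤
          2 * Real.sin θ ^2 * max (u i) (v i) ^2 := by
        have e1 : Real.sin ((1-σ)*θ) * u i ≤ Real.sin ((1-σ)*θ) * max (u i) (v i) :=
          mul_le_mul_of_nonneg_left (le_max_left _ _) h1
        have e2 : Real.sin (σ*θ) * v i ≤ Real.sin (σ*θ) * max (u i) (v i) :=
          mul_le_mul_of_nonneg_left (le_max_right _ _) h2
        have e3 : (Real.sin ((1-σ)*θ) * u i + Real.sin (σ*θ) * v i)^2 ≤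
            ((Real.sin ((1-σ)*θ) + Real.sin (σ*θ)) * max (u i) (v i))^2 := by
          have hnn : 0 ≤ Real.sin ((1-σ)*θ) * u i + Real.sin (σ*θ) * v i := by
            have := mul_nonneg h1 (hu i).le
            have := mul_nonneg h2 (hv i).le
            linarith
          apply pow_le_pow_left₀ hnn
          nlinarith [e1, e2]
        have e4 : ((Real.sin ((1-σ)*θ) + Real.sin (σ*θ)) * max (u i) (v i))^2
            ≤ 2 * Real.sin θ ^2 * max (u i) (v i)^2 := by
          have hsq : (Real.sin ((1-σ)*θ) + Real.sin (σ*θ))^2 ≤ 2 * Real.sin θ ^2 := by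
            nlinarith [sq_nonneg (Real.sin ((1-σ)*θ) - Real.sin (σ*θ)), h4]
          have := mul_le_mul_of_nonneg_right hsq (sq_nonneg (max (u i) (v i)))
          nlinarith [this]
        linarith
      simp only [hγ_def]
      rw [div_pow, div_le_iff₀ (by positivity)]
      rw [← hmax2]
      nlinarith [hup]
  have hγx : ∀ σ ∈ Set.Icc (0:ℝ) 1, ∀ i, 0 < (γ σ i)^2 := by
    intro σ hσ i
    exact pow_pos (hγpos σ hσ i) 2
  -- the energy along the geodesic and its derivatives
  set g : ℝ → ℝ := fun σ => energyN W G N (fun i => (γ σ i)^2) with hg_def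
  set g1 : ℝ → ℝ := fun σ =>
    (1/(N:ℝ)) * ∑ i, ((W' ((γ σ i)^2) - GN G N i) * (2 * γ σ i * γd σ i)) with hg1_def
  set g2 : ℝ → ℝ := fun σ =>
    (1/(N:ℝ)) * ∑ i, (W'' ((γ σ i)^2) * (2 * γ σ i * γd σ i)^2
      + (W' ((γ σ i)^2) - GN G N i) * (2 * (γd σ i)^2 - 2*θ^2*(γ σ i)^2)) with hg2_def
  have hsq_d : ∀ (σ : ℝ) i, HasDerivAt (fun σ => (γ σ i)^2) (2 * γ σ i * γd σ i) σ := by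
    intro σ i
    have := (hγana σ i).fun_pow 2
    simpa [mul_comm, mul_assoc, mul_left_comm] using this
  have hgd : ∀ σ ∈ Set.Icc (0:ℝ) 1, HasDerivAt g (g1 σ) σ := by
    intro σ hσ
    have hterm : ∀ i : Fin N, HasDerivAt (fun σ => W ((γ σ i)^2) - GN G N i * (γ σ i)^2)
        ((W' ((γ σ i)^2) - GN G N i) * (2 * γ σ i * γd σ i)) σ := by
      intro i
      have hWc := (hW' ((γ σ i)^2) (hγx σ hσ i)).comp σ (hsq_d σ i)
      have hGc := (hsq_d σ i).const_mul (GN G N i)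
      have := hWc.fun_sub hGc
      refine this.congr_deriv ?_
      ring
    have hsum : HasDerivAt (fun σ => ∑ i, (W ((γ σ i)^2) - GN G N i * (γ σ i)^2))
        (∑ i, ((W' ((γ σ i)^2) - GN G N i) * (2 * γ σ i * γd σ i))) σ :=
      HasDerivAt.fun_sum (fun i _ => hterm i)
    exact hsum.const_mul (1/(N:ℝ))
  have hg1d : ∀ σ ∈ Set.Icc (0:ℝ) 1, HasDerivAt g1 (g2 σ) σ := by
    intro σ hσ
    have hterm : ∀ i : Fin N, HasDerivAt
        (fun σ => (W' ((γ σ i)^2) - GN G N i) * (2 * γ σ i * γd σ i))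
        (W'' ((γ σ i)^2) * (2 * γ σ i * γd σ i)^2
          + (W' ((γ σ i)^2) - GN G N i) * (2 * (γd σ i)^2 - 2*θ^2*(γ σ i)^2)) σ := by
      intro i
      have hW'c : HasDerivAt (fun σ => W' ((γ σ i)^2) - GN G N i)
          (W'' ((γ σ i)^2) * (2 * γ σ i * γd σ i)) σ :=
        ((hW'' ((γ σ i)^2) (hγx σ hσ i)).comp σ (hsq_d σ i)).sub_const _
      have hprod : HasDerivAt (fun σ => 2 * γ σ i * γd σ i)
          (2 * γd σ i * γd σ i + 2 * γ σ i * (-θ^2 * γ σ i)) σ := by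
        have := (((hγana σ i).const_mul 2).fun_mul (hγdana σ i))
        convert this using 1
      have := hW'c.fun_mul hprod
      refine this.congr_deriv ?_
      ring
    have hsum : HasDerivAt (fun σ => ∑ i, ((W' ((γ σ i)^2) - GN G N i) * (2 * γ σ i * γd σ i)))
        (∑ i, (W'' ((γ σ i)^2) * (2 * γ σ i * γd σ i)^2
          + (W' ((γ σ i)^2) - GN G N i) * (2 * (γd σ i)^2 - 2*θ^2*(γ σ i)^2))) σ :=
      HasDerivAt.fun_sum (fun i _ => hterm i)
    exact hsum.const_mul (1/(N:ℝ))
  -- lower bound for g2 on [0,1]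
  set Lam : ℝ := lamW - (B1 * (C1 * (A + A) + C2) + B2) / 2 - 4 * τ with hLam_def
  have hWsum : ∀ σ ∈ Set.Icc (0:ℝ) 1,
      ∑ i, W ((γ σ i)^2) ≤ (N:ℝ) * (C1 * (A + A) + C2) := by
    intro σ hσ
    have hptw : ∀ i ∈ Finset.univ, W ((γ σ i)^2)
        ≤ C1 * (W (p i)) + C1 * (W (q i)) + 0 * (0:ℝ) + C2 := by
      intro i _
      have := hA4 (p i) (hpi i) (q i) (hqi i) _ (hγrange σ hσ i)
      linarith [this]
    have h1 := Finset.sum_le_sum hptw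
    rw [sum_comb (fun i => W (p i)) (fun i => W (q i)) (fun _ => (0:ℝ))] at h1
    have hpA' : ∑ i, W (p i) ≤ (N:ℝ) * A := by
      have := mul_le_mul_of_nonneg_left hpA hNR.le
      rw [mul_comm ((N:ℝ)) (1/(N:ℝ) * _)] at this
      calc ∑ i, W (p i) = 1/(N:ℝ) * (∑ i, W (p i)) * (N:ℝ) := by field_simp
        _ ≤ (N:ℝ) * A := by linarith [this]
    have hqA' : ∑ i, W (q i) ≤ (N:ℝ) * A := by
      have := mul_le_mul_of_nonneg_left hqA hNR.le
      rw [mul_comm ((N:ℝ)) (1/(N:ℝ) * _)] at this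
      calc ∑ i, W (q i) = 1/(N:ℝ) * (∑ i, W (q i)) * (N:ℝ) := by field_simp
        _ ≤ (N:ℝ) * A := by linarith [this]
    have hC1p := mul_le_mul_of_nonneg_left hpA' hC1
    have hC1q := mul_le_mul_of_nonneg_left hqA' hC1
    have : (0:ℝ) * ∑ _i : Fin N, (0:ℝ) = 0 := by simp
    nlinarith [h1, hC1p, hC1q]
  have hg2lb : ∀ σ ∈ Set.Icc (0:ℝ) 1, Lam * θ^2 ≤ g2 σ := by
    intro σ hσ
    have hptw : ∀ i ∈ Finset.univ,
        ((lamW - 2*τ) * ((γd σ i)^2) + (-(θ^2/2)*B1) * (W ((γ σ i)^2))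
          + (-(θ^2/2)*B3 - 2*τ*θ^2) * ((γ σ i)^2) + (-(θ^2/2)*(B2 - B3)))
        ≤ (W'' ((γ σ i)^2) * (2 * γ σ i * γd σ i)^2
            + (W' ((γ σ i)^2) - GN G N i) * (2 * (γd σ i)^2 - 2*θ^2*(γ σ i)^2)) := by
      intro i _
      have hx0 : 0 < (γ σ i)^2 := hγx σ hσ i
      have hy0 : 0 ≤ (γd σ i)^2 := sq_nonneg _
      have e1 : lamW * (γd σ i)^2
          ≤ (4 * (γ σ i)^2 * W'' ((γ σ i)^2) + 2 * W' ((γ σ i)^2)) * (γd σ i)^2 :=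
        mul_le_mul_of_nonneg_right (hA3a _ hx0) hy0
      have e2 : 4 * (γ σ i)^2 * W' ((γ σ i)^2)
          ≤ B1 * W ((γ σ i)^2) + B2 + B3 * ((γ σ i)^2 - 1) :=
        le_of_abs_le (hA3c _ hx0)
      have hneg : -(θ^2/2) ≤ (0:ℝ) := neg_nonpos.mpr (by positivity)
      have e2' : -(θ^2/2) * (B1 * W ((γ σ i)^2) + B2 + B3 * ((γ σ i)^2 - 1))
          ≤ -(θ^2/2) * (4 * (γ σ i)^2 * W' ((γ σ i)^2)) :=
        mul_le_mul_of_nonpos_left e2 hneg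
      have e3 : |GN G N i * (2*(γd σ i)^2 - 2*θ^2*(γ σ i)^2)|
          ≤ τ * (2*(γd σ i)^2 + 2*θ^2*(γ σ i)^2) := by
        rw [abs_mul]
        apply mul_le_mul (hGb i) ?_ (abs_nonneg _) hτ
        rw [abs_le]
        constructor
        · nlinarith [mul_nonneg (sq_nonneg θ) hx0.le, hy0]
        · nlinarith [mul_nonneg (sq_nonneg θ) hx0.le, hy0]
      have e3' : GN G N i * (2*(γd σ i)^2 - 2*θ^2*(γ σ i)^2)
          ≤ τ * (2*(γd σ i)^2 + 2*θ^2*(γ σ i)^2) :=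
        le_trans (le_abs_self _) e3
      nlinarith [e1, e2', e3']
    have hsum_le := Finset.sum_le_sum hptw
    rw [sum_comb (fun i => (γd σ i)^2) (fun i => W ((γ σ i)^2)) (fun i => (γ σ i)^2)] at hsum_le
    rw [hsum2 σ, hsum1 σ] at hsum_le
    have hWb := hWsum σ hσ
    have hnegB : -(θ^2/2)*B1 ≤ (0:ℝ) := by
      have : (0:ℝ) ≤ θ^2/2 * B1 := by positivity
      linarith
    have hB1' : (-(θ^2/2)*B1) * ((N:ℝ) * (C1*(A+A)+C2)) ≤ (-(θ^2/2)*B1) * (∑ i, W ((γ σ i)^2)) :=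
      mul_le_mul_of_nonpos_left hWb hnegB
    have hfinal : (N:ℝ) * (Lam * θ^2)
        ≤ ∑ i, (W'' ((γ σ i)^2) * (2 * γ σ i * γd σ i)^2
            + (W' ((γ σ i)^2) - GN G N i) * (2 * (γd σ i)^2 - 2*θ^2*(γ σ i)^2)) := by
      have hid : (N:ℝ) * (Lam * θ^2)
          = (lamW - 2*τ) * ((N:ℝ)*θ^2) + (-(θ^2/2)*B1) * ((N:ℝ)*(C1*(A+A)+C2))
            + (-(θ^2/2)*B3 - 2*τ*θ^2) * (N:ℝ) + (N:ℝ) * (-(θ^2/2)*(B2 - B3)) := by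
        simp only [hLam_def]; ring
      clear_value γ γd Lam
      linarith [hsum_le, hB1', hid]
    have hmul := mul_le_mul_of_nonneg_left hfinal (by positivity : (0:ℝ) ≤ 1/(N:ℝ))
    simp only [hg2_def]
    calc Lam * θ^2 = (1/(N:ℝ)) * ((N:ℝ) * (Lam * θ^2)) := by field_simp
      _ ≤ _ := hmul
  -- endpoints
  have hγ0 : ∀ i, γ 0 i = u i := by
    intro i
    simp only [hγ_def]
    rw [show ((1:ℝ)-0)*θ = θ by ring, show ((0:ℝ)*θ) = 0 by ring, Real.sin_zero]
    field_simp
    ring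
  have hγ1 : ∀ i, γ 1 i = v i := by
    intro i
    simp only [hγ_def]
    rw [show ((1:ℝ)-1)*θ = 0 by ring, show ((1:ℝ)*θ) = θ by ring, Real.sin_zero]
    field_simp
    ring
  have hγd0 : ∀ i, γd 0 i = θ * (v i - Real.cos θ * u i) / Real.sin θ := by
    intro i
    simp only [hγd_def]
    rw [show ((1:ℝ)-0)*θ = θ by ring, show ((0:ℝ)*θ) = 0 by ring, Real.cos_zero]
    ring
  have hgp : g 0 = energyN W G N p := by
    simp only [hg_def]
    congr 1
    funext i
    rw [hγ0 i]
    simp only [hu_def]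
    exact Real.sq_sqrt (hpi i).le
  have hgq : g 1 = energyN W G N q := by
    simp only [hg_def]
    congr 1
    funext i
    rw [hγ1 i]
    simp only [hv_def]
    exact Real.sq_sqrt (hqi i).le
  have hg10 : g1 0 = (1/(N:ℝ)) * ∑ i, ((W' (p i) - GN G N i) *
      (2 * Real.sqrt (p i) *
        (θ * (Real.sqrt (q i) - Real.cos θ * Real.sqrt (p i)) / Real.sin θ))) := by
    simp only [hg1_def]
    congr 1
    apply Finset.sum_congr rfl
    intro i _
    rw [hγ0 i, hγd0 i]
    simp only [hu_def, hv_def]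
    rw [Real.sq_sqrt (hpi i).le]
  -- the monotonicity (convexity) argument
  set c : ℝ := Lam * θ^2 with hc_def
  set φ : ℝ → ℝ := fun σ => g1 σ - g1 0 - c * σ with hφ_def
  have hφd : ∀ σ ∈ Set.Icc (0:ℝ) 1, HasDerivAt φ (g2 σ - c) σ := by
    intro σ hσ
    have hcσ : HasDerivAt (fun σ : ℝ => c * σ) c σ := by
      simpa using (hasDerivAt_id σ).const_mul c
    exact ((hg1d σ hσ).sub_const (g1 0)).sub hcσ
  have hφmono : MonotoneOn φ (Set.Icc 0 1) := by
    apply monotoneOn_of_deriv_nonneg (convex_Icc 0 1)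
    · intro σ hσ
      exact (hφd σ hσ).continuousAt.continuousWithinAt
    · intro σ hσ
      rw [interior_Icc] at hσ
      exact (hφd σ (Set.Ioo_subset_Icc_self hσ)).differentiableAt.differentiableWithinAt
    · intro σ hσ
      rw [interior_Icc] at hσ
      rw [(hφd σ (Set.Ioo_subset_Icc_self hσ)).deriv]
      have := hg2lb σ (Set.Ioo_subset_Icc_self hσ)
      simp only [hc_def]
      linarith
  have hφ0 : φ 0 = 0 := by simp [hφ_def]
  have hφnn : ∀ σ ∈ Set.Icc (0:ℝ) 1, 0 ≤ φ σ := by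
    intro σ hσ
    have := hφmono (Set.left_mem_Icc.2 zero_le_one) hσ hσ.1
    rwa [hφ0] at this
  set ψ : ℝ → ℝ := fun σ => g σ - g 0 - g1 0 * σ - c * σ^2/2 with hψ_def
  have hψd : ∀ σ ∈ Set.Icc (0:ℝ) 1, HasDerivAt ψ (φ σ) σ := by
    intro σ hσ
    have h1 : HasDerivAt (fun σ : ℝ => g1 0 * σ) (g1 0) σ := by
      simpa using (hasDerivAt_id σ).const_mul (g1 0)
    have h2 : HasDerivAt (fun σ : ℝ => c * σ^2/2) (c * σ) σ := by
      have := ((hasDerivAt_pow 2 σ).const_mul c).div_const 2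
      refine this.congr_deriv ?_
      ring
    exact (((hgd σ hσ).sub_const (g 0)).sub h1).sub h2
  have hψmono : MonotoneOn ψ (Set.Icc 0 1) := by
    apply monotoneOn_of_deriv_nonneg (convex_Icc 0 1)
    · intro σ hσ
      exact (hψd σ hσ).continuousAt.continuousWithinAt
    · intro σ hσ
      rw [interior_Icc] at hσ
      exact (hψd σ (Set.Ioo_subset_Icc_self hσ)).differentiableAt.differentiableWithinAt
    · intro σ hσ
      rw [interior_Icc] at hσ
      rw [(hψd σ (Set.Ioo_subset_Icc_self hσ)).deriv]
      exact hφnn σ (Set.Ioo_subset_Icc_self hσ)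
  have hfin := hψmono (Set.left_mem_Icc.2 zero_le_one) (Set.right_mem_Icc.2 zero_le_one)
    zero_le_one
  have hψ0 : ψ 0 = 0 := by simp [hψ_def]
  have hψ1 : ψ 1 = g 1 - g 0 - g1 0 - c/2 := by
    simp only [hψ_def]
    ring
  rw [hψ0, hψ1] at hfin
  rw [← hg10, ← hgp, ← hgq]
  simp only [hc_def, hLam_def] at hfin ⊢
  linarith [hfin]

end EVIAux
namespace EVIAux

open Real Set Filter

set_option maxHeartbeats 1000000 in
lemma energy_decreasing (W W' : ℝ → ℝ)
    (hW' : ∀ x > (0:ℝ), HasDerivAt W (W' x) x)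
    (G : ℝ → ℝ) (N : ℕ) (hN : 1 ≤ N)
    (p : ℝ → Fin N → ℝ)
    (hpP : ∀ t ∈ Set.Ici (0:ℝ), memPN N (p t))
    (hp : solvesODE (fun x => 4 * x) W' G N p) :
    ∀ t ∈ Set.Ici (0:ℝ), energyN W G N (p t) ≤ energyN W G N (p 0) := by
  have hNR : (0:ℝ) < N := by exact_mod_cast Nat.pos_of_ne_zero (by omega)
  set f : ℝ → ℝ := fun t => energyN W G N (p t) with hf_def
  set e' : ℝ → ℝ := fun t =>
    (1/(N:ℝ)) * ∑ i, ((W' (p t i) - GN G N i) * VN (fun x => 4 * x) W' G N (p t) i) with he_def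
  have hfd : ∀ t ∈ Set.Ici (0:ℝ), HasDerivWithinAt f (e' t) (Set.Ici 0) t := by
    intro t ht
    have hpd := hp t ht
    have hpdi : ∀ i, HasDerivWithinAt (fun r => p r i)
        (VN (fun x => 4 * x) W' G N (p t) i) (Set.Ici 0) t :=
      fun i => hasDerivWithinAt_pi.1 hpd i
    have hterm : ∀ i : Fin N, HasDerivWithinAt (fun r => W (p r i) - GN G N i * p r i)
        ((W' (p t i) - GN G N i) * VN (fun x => 4 * x) W' G N (p t) i) (Set.Ici 0) t := by
      intro i
      have hpos := (hpP t ht).1 i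
      have hWc := (hW' (p t i) hpos).comp_hasDerivWithinAt t (hpdi i)
      have hGc := (hpdi i).const_mul (GN G N i)
      have := hWc.fun_sub hGc
      refine this.congr_deriv ?_
      ring
    have hsum : HasDerivWithinAt (fun r => ∑ i, (W (p r i) - GN G N i * p r i))
        (∑ i, ((W' (p t i) - GN G N i) * VN (fun x => 4 * x) W' G N (p t) i))
        (Set.Ici 0) t :=
      HasDerivWithinAt.fun_sum (fun i _ => hterm i)
    exact hsum.const_mul (1/(N:ℝ))
  have hfd' : ∀ t ∈ Set.Ioi (0:ℝ), HasDerivAt f (e' t) t :=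
    fun t ht => (hfd t (Set.Ioi_subset_Ici_self ht)).hasDerivAt (Ici_mem_nhds ht)
  have he_nonpos : ∀ t ∈ Set.Ioi (0:ℝ), e' t ≤ 0 := by
    intro t ht
    set lam := lamN (fun x => 4 * x) W' G N (p t) with hlam_def
    have hsum4 : ∑ j, (4 * p t j) = 4 * (N:ℝ) := by
      rw [← Finset.mul_sum, sum_PN hN (hpP t (Set.Ioi_subset_Ici_self ht))]
    have hnum : ∑ j, (4 * p t j) * (W' (p t j) - GN G N j) = lam * (4 * (N:ℝ)) := by
      have hden : ∑ j, (fun x => 4 * x) (p t j) = 4 * (N:ℝ) := hsum4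
      simp only [hlam_def, lamN, hden]
      field_simp
    have hzero : ∑ i, 4 * p t i * (W' (p t i) - GN G N i - lam) = 0 := by
      have hexp : ∀ i ∈ Finset.univ, 4 * p t i * (W' (p t i) - GN G N i - lam)
          = (4 * p t i) * (W' (p t i) - GN G N i) - lam * (4 * p t i) := by
        intro i _; ring
      rw [Finset.sum_congr rfl hexp, Finset.sum_sub_distrib, ← Finset.mul_sum, hsum4, hnum]
      ring
    have hkey : ∑ i, ((W' (p t i) - GN G N i) * VN (fun x => 4 * x) W' G N (p t) i)
        = -(∑ i, 4 * p t i * (W' (p t i) - GN G N i - lam)^2)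
          - lam * (∑ i, 4 * p t i * (W' (p t i) - GN G N i - lam)) := by
      have hexp : ∀ i ∈ Finset.univ,
          (W' (p t i) - GN G N i) * VN (fun x => 4 * x) W' G N (p t) i
          = -(4 * p t i * (W' (p t i) - GN G N i - lam)^2)
            - lam * (4 * p t i * (W' (p t i) - GN G N i - lam)) := by
        intro i _
        simp only [VN, ← hlam_def]
        ring
      rw [Finset.sum_congr rfl hexp, Finset.sum_sub_distrib, ← Finset.sum_neg_distrib,
        ← Finset.mul_sum]
    have hnn : 0 ≤ ∑ i, 4 * p t i * (W' (p t i) - GN G N i - lam)^2 := by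
      apply Finset.sum_nonneg
      intro i _
      have := (hpP t (Set.Ioi_subset_Ici_self ht)).1 i
      positivity
    have : ∑ i, ((W' (p t i) - GN G N i) * VN (fun x => 4 * x) W' G N (p t) i) ≤ 0 := by
      rw [hkey, hzero]
      simp
      linarith
    simp only [he_def]
    have h1N : (0:ℝ) ≤ 1/(N:ℝ) := by positivity
    nlinarith [mul_le_mul_of_nonneg_left this h1N]
  intro t ht
  have hanti : AntitoneOn f (Set.Ici 0) := by
    apply antitoneOn_of_deriv_nonpos (convex_Ici 0)
    · intro s hs
      exact (hfd s hs).continuousWithinAt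
    · intro s hs
      rw [interior_Ici] at hs
      exact (hfd' s hs).differentiableAt.differentiableWithinAt
    · intro s hs
      rw [interior_Ici] at hs
      rw [(hfd' s hs).deriv]
      exact he_nonpos s hs
  exact hanti (Set.self_mem_Ici) ht ht

end EVIAux
namespace EVIAux

lemma sum_comb2 {N : ℕ} (f g : Fin N → ℝ) (c1 c2 : ℝ) :
    ∑ i, (c1 * f i + c2 * g i) = c1 * (∑ i, f i) + c2 * (∑ i, g i) := by
  simp only [Finset.sum_add_distrib, ← Finset.mul_sum]

end EVIAux

open Real Set Filter MeasureTheory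

set_option maxHeartbeats 4000000 in
/-- Sublevel evolutionary variational inequality in the Bhattacharya
case `k(p) = 4p`. -/
theorem sublevel_EVI_Bhattacharya
    (W W' W'' : ℝ → ℝ)
    (hW' : ∀ x > (0:ℝ), HasDerivAt W (W' x) x)
    (hW'' : ∀ x > (0:ℝ), HasDerivAt W' (W'' x) x)
    (hW''c : ContinuousOn W'' (Set.Ioi 0))
    (hW0 : Filter.Tendsto W (nhdsWithin 0 (Set.Ioi 0)) Filter.atTop)
    (hWtop : Filter.Tendsto W Filter.atTop Filter.atTop)
    (lamW B1 B2 B3 : ℝ) (hB1 : 0 ≤ B1) (hB2 : 0 ≤ B2)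
    (hA3a : ∀ x > (0:ℝ), lamW ≤ 4 * x * W'' x + 2 * W' x)
    (hA3c : ∀ x > (0:ℝ), |4 * x * W' x| ≤ B1 * W x + B2 + B3 * (x - 1))
    (C1 C2 : ℝ) (hC1 : 0 ≤ C1) (hC2 : 0 ≤ C2)
    (hA4 : ∀ q₀ > (0:ℝ), ∀ q₁ > (0:ℝ), ∀ q ∈ Set.Icc (min q₀ q₁) (2 * max q₀ q₁),
      W q ≤ C1 * (W q₀ + W q₁) + C2)
    (G : ℝ → ℝ) (hG : ContinuousOn G (Set.Icc 0 1))
    (N : ℕ) (hN : 1 ≤ N) (E : ℝ)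
    (q : Fin N → ℝ) (hq : memPN N q) (hqE : energyN W G N q ≤ E)
    (p : ℝ → Fin N → ℝ)
    (hpP : ∀ t ∈ Set.Ici (0:ℝ), memPN N (p t))
    (hp : solvesODE (fun x => 4 * x) W' G N p)
    (hp0E : energyN W G N (p 0) ≤ E) :
    ∀ᵐ t ∂(volume.restrict (Set.Ioi (0:ℝ))),
      1 / 2 * Filter.limsup
          (fun h => ((BhN N (p (t + h)) q)^2 - (BhN N (p t) q)^2) / h)
          (nhdsWithin 0 (Set.Ioi 0))
        + (lamW - 2 * (2 * supNorm G
            + (B1 * ((2 * C1 * E + C2 + (2 * C1 + 1) * supNorm G) + supNorm G) + B2) / 4)) / 2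
          * (BhN N (p t) q)^2
        ≤ energyN W G N q - energyN W G N (p t) := by
  classical
  have hNR : (0:ℝ) < N := by exact_mod_cast Nat.pos_of_ne_zero (by omega)
  have hNe : Nonempty (Fin N) := ⟨⟨0, by omega⟩⟩
  have hτ0 : 0 ≤ supNorm G := EVIAux.supNorm_nonneg hG
  have hGb : ∀ i, |GN G N i| ≤ supNorm G := fun i => EVIAux.abs_GN_le hG hN i
  have hqi : ∀ i, 0 < q i := hq.1
  rw [MeasureTheory.ae_restrict_iff' measurableSet_Ioi]
  refine Filter.Eventually.of_forall (fun t ht => ?_)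
  replace ht : (0:ℝ) < t := ht
  have htIci : t ∈ Set.Ici (0:ℝ) := le_of_lt ht
  have hpt : memPN N (p t) := hpP t htIci
  have hpti : ∀ i, 0 < p t i := hpt.1
  have hEt : energyN W G N (p t) ≤ E :=
    le_trans (EVIAux.energy_decreasing W W' hW' G N hN p hpP hp t htIci) hp0E
  -- W-sum bound from energy bound
  have hWbound : ∀ (x : Fin N → ℝ), memPN N x → energyN W G N x ≤ E →
      (1/(N:ℝ)) * ∑ i, W (x i) ≤ E + supNorm G := by
    intro x hx hxE
    have hterm : ∀ i ∈ Finset.univ, GN G N i * x i ≤ supNorm G * x i := fun i _ =>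
      mul_le_mul_of_nonneg_right (le_of_abs_le (hGb i)) (hx.1 i).le
    have h1 : ∑ i, GN G N i * x i ≤ supNorm G * (N:ℝ) := by
      calc ∑ i, GN G N i * x i ≤ ∑ i, supNorm G * x i := Finset.sum_le_sum hterm
        _ = supNorm G * ∑ i, x i := by rw [Finset.mul_sum]
        _ = supNorm G * N := by rw [EVIAux.sum_PN hN hx]
    have h2 : energyN W G N x
        = (1/(N:ℝ)) * ∑ i, W (x i) - (1/(N:ℝ)) * ∑ i, GN G N i * x i := by
      simp only [energyN]
      rw [Finset.sum_sub_distrib]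
      ring
    have h3 : (1/(N:ℝ)) * ∑ i, GN G N i * x i ≤ supNorm G := by
      have hh := mul_le_mul_of_nonneg_left h1 (by positivity : (0:ℝ) ≤ 1/(N:ℝ))
      calc (1/(N:ℝ)) * ∑ i, GN G N i * x i ≤ (1/(N:ℝ)) * (supNorm G * N) := hh
        _ = supNorm G := by field_simp
    linarith [hxE, h2.symm.le, h2.le]
  have hWp := hWbound (p t) hpt hEt
  have hWq := hWbound q hq hqE
  -- the correlation function S
  set S : ℝ → ℝ := fun r => (1/(N:ℝ)) * ∑ i, Real.sqrt (p r i) * Real.sqrt (q i) with hS_def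
  have hSle : ∀ r ∈ Set.Ici (0:ℝ), S r ≤ 1 := by
    intro r hr
    have hpr := hpP r hr
    have hterm : ∀ i ∈ Finset.univ,
        Real.sqrt (p r i) * Real.sqrt (q i) ≤ (1/2) * (p r i) + (1/2) * (q i) := by
      intro i _
      have h1 := Real.sq_sqrt (hpr.1 i).le
      have h2 := Real.sq_sqrt (hqi i).le
      nlinarith [sq_nonneg (Real.sqrt (p r i) - Real.sqrt (q i))]
    have hs := Finset.sum_le_sum hterm
    rw [EVIAux.sum_comb2, EVIAux.sum_PN hN hpr, EVIAux.sum_PN hN hq] at hs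
    have := mul_le_mul_of_nonneg_left hs (by positivity : (0:ℝ) ≤ 1/(N:ℝ))
    simp only [hS_def]
    calc (1/(N:ℝ)) * ∑ i, Real.sqrt (p r i) * Real.sqrt (q i)
        ≤ (1/(N:ℝ)) * (1/2 * (N:ℝ) + 1/2 * (N:ℝ)) := this
      _ = 1 := by field_simp; norm_num
  have hSpos : ∀ r ∈ Set.Ici (0:ℝ), 0 < S r := by
    intro r hr
    have hpr := hpP r hr
    have : 0 < ∑ i, Real.sqrt (p r i) * Real.sqrt (q i) :=
      Finset.sum_pos (fun i _ =>
        mul_pos (Real.sqrt_pos.2 (hpr.1 i)) (Real.sqrt_pos.2 (hqi i))) Finset.univ_nonempty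
    simp only [hS_def]
    positivity
  -- Bhattacharya distance in terms of S
  have hHe : ∀ r ∈ Set.Ici (0:ℝ), HeN N (p r) q = Real.sqrt (2 - 2 * S r) := by
    intro r hr
    have hpr := hpP r hr
    simp only [HeN]
    congr 1
    have hterm : ∀ i ∈ Finset.univ, (Real.sqrt (q i) - Real.sqrt (p r i))^2
        = (1:ℝ) * (p r i) + (1:ℝ) * (q i)
          + (-2) * (Real.sqrt (p r i) * Real.sqrt (q i)) + 0 := by
      intro i _
      have h1 := Real.sq_sqrt (hpr.1 i).le
      have h2 := Real.sq_sqrt (hqi i).le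
      nlinarith [sq_nonneg (Real.sqrt (q i) - Real.sqrt (p r i))]
    rw [Finset.sum_congr rfl hterm, EVIAux.sum_comb, EVIAux.sum_PN hN hpr,
      EVIAux.sum_PN hN hq]
    simp only [hS_def]
    field_simp
    ring
  have hBh : ∀ r ∈ Set.Ici (0:ℝ), BhN N (p r) q
      = 2 * Real.arcsin (Real.sqrt ((1 - S r)/2)) := by
    intro r hr
    have hSr := hSle r hr
    have h4 : Real.sqrt 4 = 2 := by
      rw [show (4:ℝ) = 2^2 by norm_num, Real.sqrt_sq (by norm_num : (0:ℝ) ≤ 2)]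
    simp only [BhN]
    rw [hHe r hr]
    congr 2
    rw [show Real.sqrt (2 - 2*S r) / 2 = Real.sqrt (2 - 2*S r) / Real.sqrt 4 by rw [h4],
      ← Real.sqrt_div (by linarith) 4]
    congr 1
    ring
  -- derivative of S at t
  have hpd : HasDerivAt p (VN (fun x => 4*x) W' G N (p t)) t :=
    (hp t htIci).hasDerivAt (Ici_mem_nhds ht)
  have hpdi : ∀ i, HasDerivAt (fun r => p r i) (VN (fun x => 4*x) W' G N (p t) i) t :=
    fun i => hasDerivAt_pi.1 hpd i
  set Sd : ℝ := (1/(N:ℝ)) * ∑ i, (1 / (2 * Real.sqrt (p t i))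
    * VN (fun x => 4*x) W' G N (p t) i * Real.sqrt (q i)) with hSd_def
  have hSdd : HasDerivAt S Sd t := by
    have hterm : ∀ i : Fin N, HasDerivAt (fun r => Real.sqrt (p r i) * Real.sqrt (q i))
        (1 / (2 * Real.sqrt (p t i)) * VN (fun x => 4*x) W' G N (p t) i
          * Real.sqrt (q i)) t := by
      intro i
      exact ((Real.hasDerivAt_sqrt (hpti i).ne').comp t (hpdi i)).mul_const _
    have hsum : HasDerivAt (fun r => ∑ i, Real.sqrt (p r i) * Real.sqrt (q i))
        (∑ i, (1 / (2 * Real.sqrt (p t i)) * VN (fun x => 4*x) W' G N (p t) i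
          * Real.sqrt (q i))) t :=
      HasDerivAt.fun_sum (fun i _ => hterm i)
    exact hsum.const_mul _
  set D : ℝ → ℝ := fun r => BhN N (p r) q ^ 2 with hD_def
  set lam := lamN (fun x => 4*x) W' G N (p t) with hlam_def
  obtain ⟨d, hDd, hfinal⟩ : ∃ d, HasDerivAt D d t ∧
      1/2 * d + (lamW - 2 * (2 * supNorm G
          + (B1 * ((2 * C1 * E + C2 + (2 * C1 + 1) * supNorm G) + supNorm G) + B2) / 4)) / 2
        * (BhN N (p t) q)^2
      ≤ energyN W G N q - energyN W G N (p t) := by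
    rcases lt_or_eq_of_le (hSle t htIci) with hlt | heq1
    · -- main case : S t < 1
      set x0 : ℝ := Real.sqrt ((1 - S t)/2) with hx0_def
      have hx0arg : 0 < (1 - S t)/2 := by linarith
      have hx0pos : 0 < x0 := Real.sqrt_pos.2 hx0arg
      have hx0sq : x0^2 = (1 - S t)/2 := Real.sq_sqrt hx0arg.le
      have hx0lt : x0 < 1 := by
        have h1 : (1 - S t)/2 < 1 := by linarith [hSpos t htIci]
        calc x0 < Real.sqrt 1 := Real.sqrt_lt_sqrt hx0arg.le h1
          _ = 1 := Real.sqrt_one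
      set θ : ℝ := 2 * Real.arcsin x0 with hθ_def
      have harcpos : 0 < Real.arcsin x0 := Real.arcsin_pos.2 hx0pos
      have hθ0 : 0 < θ := by simp only [hθ_def]; linarith
      have hcosarc : Real.cos (Real.arcsin x0) = Real.sqrt (1 - x0^2) :=
        Real.cos_arcsin x0
      have hx0le1 : 1 - x0^2 ≥ 0 := by nlinarith [hx0lt, hx0pos]
      have hcosθ : Real.cos θ = S t := by
        have h1 : Real.cos θ = 2 * Real.cos (Real.arcsin x0)^2 - 1 := Real.cos_two_mul _
        rw [hcosarc, Real.sq_sqrt hx0le1] at h1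
        rw [h1, hx0sq]
        ring
      have hθπ2 : θ ≤ π/2 := by
        by_contra hcon
        push_neg at hcon
        have hθpi : θ ≤ π + π/2 := by
          have := Real.arcsin_le_pi_div_two x0
          simp only [hθ_def]
          linarith [Real.pi_pos]
        have := Real.cos_nonpos_of_pi_div_two_le_of_le (le_of_lt hcon) hθpi
        rw [hcosθ] at this
        linarith [hSpos t htIci]
      have hsinarc : Real.sin (Real.arcsin x0) = x0 :=
        Real.sin_arcsin (by linarith) hx0lt.le
      have hsinθ : Real.sin θ = 2 * x0 * Real.sqrt (1 - x0^2) := by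
        simp only [hθ_def]
        rw [Real.sin_two_mul, hsinarc, hcosarc]
      have hsx : 0 < Real.sqrt (1 - x0^2) := by
        have : (0:ℝ) < 1 - x0^2 := by nlinarith [hx0lt, hx0pos]
        exact Real.sqrt_pos.2 this
      have hsinθpos : 0 < Real.sin θ := by
        rw [hsinθ]; positivity
      -- derivative of F at S t
      have h1 : HasDerivAt (fun s : ℝ => (1 - s)/2) (-(1/2)) (S t) := by
        have := ((hasDerivAt_id (S t)).const_sub 1).div_const 2
        exact this.congr_deriv (by norm_num)
      have h2 : HasDerivAt Real.sqrt (1/(2 * x0)) ((1 - S t)/2) := by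
        have := Real.hasDerivAt_sqrt hx0arg.ne'
        convert this using 2
      have hinner : HasDerivAt (fun s : ℝ => Real.sqrt ((1 - s)/2))
          (1/(2*x0) * (-(1/2))) (S t) := h2.comp (S t) h1
      have harcd : HasDerivAt (fun s : ℝ => Real.arcsin (Real.sqrt ((1 - s)/2)))
          (1/Real.sqrt (1 - x0^2) * (1/(2*x0) * (-(1/2)))) (S t) := by
        have h3 : HasDerivAt Real.arcsin (1/Real.sqrt (1 - x0^2)) x0 :=
          Real.hasDerivAt_arcsin (by linarith) hx0lt.ne
        exact h3.comp (S t) hinner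
      set dF : ℝ := 2 * (2 * Real.arcsin x0)^1
          * (2 * (1/Real.sqrt (1 - x0^2) * (1/(2*x0) * (-(1/2))))) with hdF_def
      have hFd : HasDerivAt (fun s : ℝ => (2 * Real.arcsin (Real.sqrt ((1 - s)/2)))^2)
          dF (S t) := by
        have := (harcd.const_mul 2).fun_pow 2
        refine this.congr_deriv ?_
        norm_num [hdF_def, ← hx0_def]
      have hdFval : dF = -(2*θ)/Real.sin θ := by
        simp only [hdF_def, hθ_def]
        rw [hsinθ]
        field_simp
      -- derivative of D at t
      have hDF : HasDerivAt D (dF * Sd) t := by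
        have hcomp : HasDerivAt ((fun s : ℝ => (2 * Real.arcsin (Real.sqrt ((1 - s)/2)))^2) ∘ S)
            (dF * Sd) t := hFd.comp t hSdd
        apply hcomp.congr_of_eventuallyEq
        filter_upwards [Ici_mem_nhds ht] with r hr
        simp only [hD_def, Function.comp]
        rw [hBh r hr]
      -- identify BhN at time t with θ
      have hBht : BhN N (p t) q = θ := by
        rw [hBh t htIci]
      -- sums bookkeeping
      have hY : ∑ i, ((W' (p t i) - GN G N i) * p t i) = (N:ℝ) * lam := by
        have hsum4 : ∑ j, (4 * p t j) = 4 * (N:ℝ) := by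
          rw [← Finset.mul_sum, EVIAux.sum_PN hN hpt]
        have hnum : ∑ j, ((4 * p t j) * (W' (p t j) - GN G N j)) = lam * (4*(N:ℝ)) := by
          have hden : ∑ j, (fun x : ℝ => 4 * x) (p t j) = 4 * (N:ℝ) := hsum4
          simp only [hlam_def, lamN, hden]
          field_simp
        have hexp : ∀ i ∈ Finset.univ, (4 * p t i) * (W' (p t i) - GN G N i)
            = 4 * ((W' (p t i) - GN G N i) * p t i) := by
          intro i _; ring
        rw [Finset.sum_congr rfl hexp, ← Finset.mul_sum] at hnum
        linarith [hnum]
      have hZ : ∑ i, Real.sqrt (p t i) * Real.sqrt (q i) = (N:ℝ) * Real.cos θ := by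
        rw [hcosθ]
        simp only [hS_def]
        field_simp
      have hSd_eq : Sd = (1/(N:ℝ)) * ((-2)
            * (∑ i, ((W' (p t i) - GN G N i) * (Real.sqrt (p t i) * Real.sqrt (q i))))
          + (2*lam) * (∑ i, Real.sqrt (p t i) * Real.sqrt (q i))) := by
        simp only [hSd_def]
        congr 1
        have hterm : ∀ i ∈ Finset.univ, 1 / (2 * Real.sqrt (p t i))
            * VN (fun x => 4*x) W' G N (p t) i * Real.sqrt (q i)
            = (-2) * ((W' (p t i) - GN G N i) * (Real.sqrt (p t i) * Real.sqrt (q i)))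
              + (2*lam) * (Real.sqrt (p t i) * Real.sqrt (q i)) := by
          intro i _
          simp only [VN, ← hlam_def]
          have hu2 : Real.sqrt (p t i) ^ 2 = p t i := Real.sq_sqrt (hpti i).le
          have hune : Real.sqrt (p t i) ≠ 0 := (Real.sqrt_pos.2 (hpti i)).ne'
          rw [← hu2]
          field_simp
          rw [Real.sqrt_sq (Real.sqrt_nonneg (p t i))]
          ring
        rw [Finset.sum_congr rfl hterm, EVIAux.sum_comb2]
      -- match dF * Sd / 2 with the key lemma's linear term
      have hmatch : 1/2 * (dF * Sd) = (1/(N:ℝ)) * ∑ i, ((W' (p t i) - GN G N i) *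
          (2 * Real.sqrt (p t i) *
            (θ * (Real.sqrt (q i) - Real.cos θ * Real.sqrt (p t i)) / Real.sin θ))) := by
        have hterm : ∀ i ∈ Finset.univ, (W' (p t i) - GN G N i) *
            (2 * Real.sqrt (p t i) *
              (θ * (Real.sqrt (q i) - Real.cos θ * Real.sqrt (p t i)) / Real.sin θ))
            = (2*θ/Real.sin θ)
                * ((W' (p t i) - GN G N i) * (Real.sqrt (p t i) * Real.sqrt (q i)))
              + (-(2*θ*Real.cos θ/Real.sin θ)) * ((W' (p t i) - GN G N i) * p t i) := by
          intro i _
          have hu2 : Real.sqrt (p t i) ^ 2 = p t i := Real.sq_sqrt (hpti i).le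
          rw [← hu2]
          field_simp
          rw [Real.sqrt_sq (Real.sqrt_nonneg (p t i))]
          ring
        rw [Finset.sum_congr rfl hterm, EVIAux.sum_comb2, hY, hSd_eq, hZ, hdFval]
        field_simp
        ring
      -- apply the key lemma
      have hcoskey : (1/(N:ℝ)) * ∑ i, Real.sqrt (p t i) * Real.sqrt (q i) = Real.cos θ := by
        rw [hZ]; field_simp
      have hkey := EVIAux.key W W' W'' hW' hW'' lamW B1 B2 B3 hB1 hA3a hA3c C1 C2 hC1 hA4
        G N hN (supNorm G) (E + supNorm G) hτ0 hGb (p t) q hpt hq hWp hWq θ hθ0 hθπ2 hcoskey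
      refine ⟨dF * Sd, hDF, ?_⟩
      rw [hBht]
      rw [hmatch]
      have hconst : (lamW - 2 * (2 * supNorm G
            + (B1 * ((2 * C1 * E + C2 + (2 * C1 + 1) * supNorm G) + supNorm G) + B2) / 4)) / 2
            * θ^2
          ≤ (lamW - (B1 * (C1 * ((E + supNorm G) + (E + supNorm G)) + C2) + B2) / 2
              - 4 * supNorm G) / 2 * θ^2 := by
        have hc : (lamW - 2 * (2 * supNorm G
            + (B1 * ((2 * C1 * E + C2 + (2 * C1 + 1) * supNorm G) + supNorm G) + B2) / 4))
            ≤ (lamW - (B1 * (C1 * ((E + supNorm G) + (E + supNorm G)) + C2) + B2) / 2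
              - 4 * supNorm G) := by
          have hBτ : 0 ≤ B1 * supNorm G := mul_nonneg hB1 hτ0
          nlinarith [hBτ]
        nlinarith [sq_nonneg θ, hc]
      linarith [hkey, hconst]
    · -- degenerate case : S t = 1
      have heq1' : S t = 1 := heq1
      have hpteq : p t = q := by
        funext i
        have hsum1 : ∑ i, Real.sqrt (p t i) * Real.sqrt (q i) = (N:ℝ) := by
          have : S t = 1 := heq1'
          simp only [hS_def] at this
          field_simp at this
          linarith [this]
        have hterm : ∀ j ∈ Finset.univ,
            Real.sqrt (p t j) * Real.sqrt (q j) ≤ (1/2) * (p t j) + (1/2) * (q j) := by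
          intro j _
          have h1 := Real.sq_sqrt (hpti j).le
          have h2 := Real.sq_sqrt (hqi j).le
          nlinarith [sq_nonneg (Real.sqrt (p t j) - Real.sqrt (q j))]
        have hsum2 : ∑ j, ((1/2) * (p t j) + (1/2) * (q j)) = (N:ℝ) := by
          rw [EVIAux.sum_comb2, EVIAux.sum_PN hN hpt, EVIAux.sum_PN hN hq]
          ring
        have heqsum : ∑ j, Real.sqrt (p t j) * Real.sqrt (q j)
            = ∑ j, ((1/2) * (p t j) + (1/2) * (q j)) := by rw [hsum1, hsum2]
        have hpointwise := (Finset.sum_eq_sum_iff_of_le hterm).1 heqsum i (Finset.mem_univ i)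
        have h1 := Real.sq_sqrt (hpti i).le
        have h2 := Real.sq_sqrt (hqi i).le
        have h0 : (Real.sqrt (p t i) - Real.sqrt (q i))^2 = 0 := by nlinarith
        have h0' : Real.sqrt (p t i) = Real.sqrt (q i) := by
          have h00 := (pow_eq_zero_iff (by norm_num : (2:ℕ) ≠ 0)).1 h0
          exact sub_eq_zero.1 h00
        calc p t i = Real.sqrt (p t i)^2 := h1.symm
          _ = Real.sqrt (q i)^2 := by rw [h0']
          _ = q i := h2
      have hBh0 : BhN N (p t) q = 0 := by
        rw [hBh t htIci, heq1']
        norm_num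
      have hSd0 : Sd = 0 := by
        have hmax : IsLocalMax S t := by
          filter_upwards [Ici_mem_nhds ht] with r hr
          calc S r ≤ 1 := hSle r hr
            _ = S t := heq1'.symm
        exact hmax.hasDerivAt_eq_zero hSdd
      have hD0 : D t = 0 := by simp only [hD_def]; rw [hBh0]; ring
      have hDd : HasDerivAt D 0 t := by
        rw [hasDerivAt_iff_tendsto_slope]
        have hslopeS : Tendsto (slope S t) (nhdsWithin t {t}ᶜ) (nhds 0) := by
          have := hasDerivAt_iff_tendsto_slope.1 hSdd
          rwa [hSd0] at this
        have habs : Tendsto (fun r => π^2/2 * |slope S t r|) (nhdsWithin t {t}ᶜ) (nhds 0) := by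
          have h1 := hslopeS.abs
          have h2 := h1.const_mul (π^2/2)
          simpa using h2
        apply squeeze_zero_norm' ?_ habs
        have hIci : Set.Ici (0:ℝ) ∈ nhdsWithin t ({t}ᶜ : Set ℝ) :=
          nhdsWithin_le_nhds (Ici_mem_nhds ht)
        filter_upwards [hIci, self_mem_nhdsWithin] with r hr hrne
        have hrne' : r ≠ t := hrne
        have hDb : D r ≤ π^2/2 * (1 - S r) := by
          have hSr := hSle r hr
          have hx : (0:ℝ) ≤ Real.sqrt ((1 - S r)/2) := Real.sqrt_nonneg _
          have hx1 : Real.sqrt ((1 - S r)/2) ≤ 1 := by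
            apply Real.sqrt_le_one.2
            have := hSpos r hr
            linarith
          have harc := EVIAux.arcsin_le_pi_div_two_mul hx hx1
          have harcnn : 0 ≤ Real.arcsin (Real.sqrt ((1 - S r)/2)) :=
            Real.arcsin_nonneg.2 hx
          have hDrw : D r = (2 * Real.arcsin (Real.sqrt ((1 - S r)/2)))^2 := by
            simp only [hD_def]
            rw [hBh r hr]
          rw [hDrw]
          have hb : (2 * Real.arcsin (Real.sqrt ((1 - S r)/2)))^2
              ≤ (2 * (π/2 * Real.sqrt ((1 - S r)/2)))^2 := by
            apply pow_le_pow_left₀ (by linarith)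
            have hπ := Real.pi_pos
            nlinarith [harc]
          have hsq : Real.sqrt ((1 - S r)/2)^2 = (1 - S r)/2 := by
            apply Real.sq_sqrt
            linarith
          calc (2 * Real.arcsin (Real.sqrt ((1 - S r)/2)))^2
              ≤ (2 * (π/2 * Real.sqrt ((1 - S r)/2)))^2 := hb
            _ = π^2 * (Real.sqrt ((1 - S r)/2)^2) := by ring
            _ = π^2/2 * (1 - S r) := by rw [hsq]; ring
        have hDr0 : 0 ≤ D r := sq_nonneg _
        have h1S : 1 - S r = |S r - S t| := by
          rw [heq1', abs_of_nonpos (by linarith [hSle r hr])]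
          ring
        rw [Real.norm_eq_abs, slope_def_field, slope_def_field, hD0, sub_zero]
        rw [abs_div, abs_div, ← mul_div_assoc]
        gcongr
        rw [abs_of_nonneg hDr0, ← h1S]
        exact hDb
      refine ⟨0, hDd, ?_⟩
      rw [hBh0, hpteq]
      norm_num
  -- common ending : limsup of the difference quotients equals d
  have hmap : Tendsto (fun h : ℝ => t + h) (nhdsWithin 0 (Set.Ioi 0))
      (nhdsWithin t ({t}ᶜ : Set ℝ)) := by
    rw [tendsto_nhdsWithin_iff]
    constructor
    · have h1 : Tendsto (fun h : ℝ => t + h) (nhds 0) (nhds (t + 0)) :=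
        (continuous_const.add continuous_id).tendsto 0
      have h2 := h1.mono_left (nhdsWithin_le_nhds : nhdsWithin (0:ℝ) (Set.Ioi 0) ≤ nhds 0)
      simpa using h2
    · filter_upwards [self_mem_nhdsWithin] with h hh
      simp only [Set.mem_compl_iff, Set.mem_singleton_iff]
      have : (0:ℝ) < h := hh
      intro hcon
      have : h = 0 := by linarith [hcon, add_eq_left.1 hcon]
      linarith
  have hquot : Tendsto (fun h => (D (t + h) - D t)/h) (nhdsWithin 0 (Set.Ioi 0)) (nhds d) := by
    have hslope := hasDerivAt_iff_tendsto_slope.1 hDd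
    have hcomp := hslope.comp hmap
    apply hcomp.congr
    intro h
    simp only [Function.comp]
    rw [slope_def_field, show t + h - t = h by ring]
  have hlim : Filter.limsup
      (fun h => ((BhN N (p (t + h)) q)^2 - (BhN N (p t) q)^2) / h)
      (nhdsWithin 0 (Set.Ioi 0)) = d := by
    have : (fun h => ((BhN N (p (t + h)) q)^2 - (BhN N (p t) q)^2) / h)
        = fun h => (D (t + h) - D t)/h := by
      funext h
      simp only [hD_def]
    rw [this]
    exact hquot.limsup_eq
  rw [hlim]
  exact hfinal
end
end
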